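/- Let u : ℝ² → ℂ be a smooth solution of the mKdV equation uₜ + 6u²uₓ + uₓₓₓ = 0, let λ₁ ∈ ℂ \ {0}, and let (p, q) be a smooth solution of both the AKNS spectral problem in x and the time-evolution equation of the Lax pair at λ = λ₁ with potential u, such that p(x,t)² + q(x,t)² ≠ 0 for all (x,t). Then ũ := u + 4λ₁pq/(p² + q²) is a smooth solution of the mKdV equation uₜ + 6u²uₓ + uₓₓₓ = 0. -/

import Mathlib

/-- Partial derivative in the first (space) variable. -/
noncomputable def pdX (u : ℝ → ℝ → ℂ) : ℝ → ℝ → ℂ := fun x t => deriv (fun y => u y t) x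

/-- Partial derivative in the second (time) variable. -/
noncomputable def pdT (u : ℝ → ℝ → ℂ) : ℝ → ℝ → ℂ := fun x t => deriv (fun s => u x s) t

/-- `u` solves the mKdV equation `uₜ + 6u²uₓ + uₓₓₓ = 0`. -/
def IsMKdV (u : ℝ → ℝ → ℂ) : Prop :=
  ∀ x t, pdT u x t + 6 * (u x t) ^ 2 * pdX u x t + pdX (pdX (pdX u)) x t = 0

/-- `(p,q)` solves the AKNS spectral problem in `x` at `λ` with potential `u`. -/
def IsAKNS (lam : ℂ) (u p q : ℝ → ℝ → ℂ) : Prop :=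
  ∀ x t, pdX p x t = lam * p x t + u x t * q x t ∧
    pdX q x t = -(u x t) * p x t - lam * q x t

/-- `(p,q)` solves the time-evolution equation of the Lax pair at `λ` with potential `u`. -/
def IsLaxT (lam : ℂ) (u p q : ℝ → ℝ → ℂ) : Prop :=
  ∀ x t, (pdT p x t = (-4 * lam ^ 3 - 2 * lam * (u x t) ^ 2) * p x t
      + (-4 * lam ^ 2 * u x t - 2 * lam * pdX u x t - 2 * (u x t) ^ 3
          - pdX (pdX u) x t) * q x t) ∧
    (pdT q x t = (4 * lam ^ 2 * u x t - 2 * lam * pdX u x t + 2 * (u x t) ^ 3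
          + pdX (pdX u) x t) * p x t
      + (4 * lam ^ 3 + 2 * lam * (u x t) ^ 2) * q x t)

theorem HasDerivAt.npowc {f : ℝ → ℂ} {f' : ℂ} {x : ℝ} (h : HasDerivAt f f' x) (n : ℕ) :
    HasDerivAt (fun y => f y ^ n) ((n : ℂ) * f x ^ (n - 1) * f') x :=
  (hasDerivAt_pow n (f x)).comp x h

theorem sliceX {f : ℝ → ℝ → ℂ} (hf : ContDiff ℝ (⊤ : ℕ∞) (Function.uncurry f)) (x t : ℝ) :
    HasDerivAt (fun y => f y t) (pdX f x t) x := by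
  have h : DifferentiableAt ℝ (fun y => f y t) x := by
    have e : (fun y => f y t) = (Function.uncurry f) ∘ (fun y => (y, t)) := rfl
    rw [e]
    exact ((hf.differentiable (by simp)).comp
      (differentiable_id.prodMk (differentiable_const t))).differentiableAt
  exact h.hasDerivAt

theorem sliceT {f : ℝ → ℝ → ℂ} (hf : ContDiff ℝ (⊤ : ℕ∞) (Function.uncurry f)) (x t : ℝ) :
    HasDerivAt (fun s => f x s) (pdT f x t) t := by
  have h : DifferentiableAt ℝ (fun s => f x s) t := by
    have e : (fun s => f x s) = (Function.uncurry f) ∘ (fun s => (x, s)) := rfl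
    rw [e]
    exact ((hf.differentiable (by simp)).comp
      ((differentiable_const x).prodMk differentiable_id)).differentiableAt
  exact h.hasDerivAt

theorem contDiff_pdX {f : ℝ → ℝ → ℂ} (hf : ContDiff ℝ (⊤ : ℕ∞) (Function.uncurry f)) :
    ContDiff ℝ (⊤ : ℕ∞) (Function.uncurry (pdX f)) := by
  have e : Function.uncurry (pdX f)
      = fun z : ℝ × ℝ => fderiv ℝ (Function.uncurry f) z (1, 0) := by
    funext z
    have h1 : HasFDerivAt (Function.uncurry f) (fderiv ℝ (Function.uncurry f) z) z :=
      ((hf.differentiable (by simp)) z).hasFDerivAt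
    have h2 : HasDerivAt (fun y : ℝ => (y, z.2)) ((1 : ℝ), (0 : ℝ)) z.1 :=
      (hasDerivAt_id z.1).prodMk (hasDerivAt_const z.1 z.2)
    have h3 := h1.comp_hasDerivAt z.1 h2
    exact h3.deriv
  rw [e]
  exact (hf.fderiv_right (by simp)).clm_apply contDiff_const

set_option maxHeartbeats 1000000 in
/-- the one-fold Darboux transformation for the mKdV equation. -/
theorem stmt_6 (u : ℝ → ℝ → ℂ) (hu : ContDiff ℝ (⊤ : ℕ∞) (Function.uncurry u))
    (hmkdv : IsMKdV u) (lam : ℂ) (hlam : lam ≠ 0)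
    (p q : ℝ → ℝ → ℂ)
    (hp : ContDiff ℝ (⊤ : ℕ∞) (Function.uncurry p)) (hq : ContDiff ℝ (⊤ : ℕ∞) (Function.uncurry q))
    (hAKNS : IsAKNS lam u p q) (hLax : IsLaxT lam u p q)
    (hnz : ∀ x t, (p x t) ^ 2 + (q x t) ^ 2 ≠ 0) :
    ContDiff ℝ (⊤ : ℕ∞) (Function.uncurry
      (fun x t => u x t + 4 * lam * p x t * q x t / ((p x t) ^ 2 + (q x t) ^ 2))) ∧
    IsMKdV (fun x t => u x t + 4 * lam * p x t * q x t / ((p x t) ^ 2 + (q x t) ^ 2)) := by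
  constructor
  · have e : Function.uncurry
        (fun x t => u x t + 4 * lam * p x t * q x t / ((p x t) ^ 2 + (q x t) ^ 2))
        = fun z : ℝ × ℝ => Function.uncurry u z
          + 4 * lam * Function.uncurry p z * Function.uncurry q z
            / ((Function.uncurry p z) ^ 2 + (Function.uncurry q z) ^ 2) := rfl
    rw [e]
    have h3 : ContDiff ℝ (⊤ : ℕ∞) (fun z : ℝ × ℝ =>
        (Function.uncurry p z) ^ 2 + (Function.uncurry q z) ^ 2) := (hp.pow 2).add (hq.pow 2)
    simp only [div_eq_mul_inv]
    exact hu.add (((contDiff_const.mul hp).mul hq).mul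
      (h3.inv (fun z : ℝ × ℝ => hnz z.1 z.2)))
  · -- pointwise x-derivative facts
    have hUx : ∀ a b, HasDerivAt (fun y => u y b) (pdX u a b) a := fun a b => sliceX hu a b
    have hU1x : ∀ a b, HasDerivAt (fun y => pdX u y b) (pdX (pdX u) a b) a :=
      fun a b => sliceX (contDiff_pdX hu) a b
    have hU2x : ∀ a b, HasDerivAt (fun y => pdX (pdX u) y b) (pdX (pdX (pdX u)) a b) a :=
      fun a b => sliceX (contDiff_pdX (contDiff_pdX hu)) a b
    have hPx : ∀ a b, HasDerivAt (fun y => p y b) (lam * p a b + u a b * q a b) a :=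
      fun a b => (sliceX hp a b).congr_deriv (hAKNS a b).1
    have hQx : ∀ a b, HasDerivAt (fun y => q y b) (-(u a b) * p a b - lam * q a b) a :=
      fun a b => (sliceX hq a b).congr_deriv (hAKNS a b).2
    have key1 : ∀ a b, pdX (fun x t => u x t + 4 * lam * p x t * q x t / ((p x t) ^ 2 + (q x t) ^ 2)) a b = pdX u a b + 4 * lam * (((q a b) ^ 2 - (p a b) ^ 2) * (u a b * ((p a b) ^ 2 + (q a b) ^ 2) + 2 * lam * (p a b * q a b))) / ((p a b) ^ 2 + (q a b) ^ 2) ^ 2 := by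
      intro a b
      have h0 := hnz a b
      have H : HasDerivAt (fun y => u y b + 4 * lam * p y b * q y b / ((p y b) ^ 2 + (q y b) ^ 2))
          (pdX u a b + 4 * lam * (((q a b) ^ 2 - (p a b) ^ 2) * (u a b * ((p a b) ^ 2 + (q a b) ^ 2) + 2 * lam * (p a b * q a b))) / ((p a b) ^ 2 + (q a b) ^ 2) ^ 2) a :=
        ((hUx a b).add ((((hPx a b).const_mul (4 * lam)).mul (hQx a b)).div
          (((hPx a b).npowc 2).add ((hQx a b).npowc 2)) h0)).congr_deriv
          (by simp only [Pi.add_apply, Pi.sub_apply, Pi.mul_apply]; push_cast; field_simp; ring)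
      exact H.deriv
    have key2 : ∀ a b, pdX (pdX (fun x t => u x t + 4 * lam * p x t * q x t / ((p x t) ^ 2 + (q x t) ^ 2))) a b = pdX (pdX u) a b + (4 * lam * (pdX u a b * (((q a b) ^ 2 - (p a b) ^ 2) * ((p a b) ^ 2 + (q a b) ^ 2) ^ 2)) - 16 * lam * ((u a b) ^ 2 * ((p a b * q a b) * ((p a b) ^ 2 + (q a b) ^ 2) ^ 2)) + 8 * lam ^ 2 * (u a b * ((q a b) ^ 6 - 9 * ((p a b) ^ 2 * (q a b) ^ 4) - 9 * ((p a b) ^ 4 * (q a b) ^ 2) + (p a b) ^ 6)) + 16 * lam ^ 3 * ((p a b * q a b) * ((q a b) ^ 4 - 6 * ((p a b) ^ 2 * (q a b) ^ 2) + (p a b) ^ 4))) / ((p a b) ^ 2 + (q a b) ^ 2) ^ 3 := by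
      intro a b
      have h0 := hnz a b
      have hfun : (fun y => pdX (fun x t => u x t + 4 * lam * p x t * q x t / ((p x t) ^ 2 + (q x t) ^ 2)) y b)
          = (fun y => pdX u y b + 4 * lam * (((q y b) ^ 2 - (p y b) ^ 2) * (u y b * ((p y b) ^ 2 + (q y b) ^ 2) + 2 * lam * (p y b * q y b))) / ((p y b) ^ 2 + (q y b) ^ 2) ^ 2) := funext fun y => key1 y b
      have hPa := hPx a b
      have hQa := hQx a b
      have hUa := hUx a b
      have hD := (hQa.npowc 2).sub (hPa.npowc 2)
      have hS := (hPa.npowc 2).add (hQa.npowc 2)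
      have H : HasDerivAt (fun y => pdX u y b + 4 * lam * (((q y b) ^ 2 - (p y b) ^ 2) * (u y b * ((p y b) ^ 2 + (q y b) ^ 2) + 2 * lam * (p y b * q y b))) / ((p y b) ^ 2 + (q y b) ^ 2) ^ 2)
          (pdX (pdX u) a b + (4 * lam * (pdX u a b * (((q a b) ^ 2 - (p a b) ^ 2) * ((p a b) ^ 2 + (q a b) ^ 2) ^ 2)) - 16 * lam * ((u a b) ^ 2 * ((p a b * q a b) * ((p a b) ^ 2 + (q a b) ^ 2) ^ 2)) + 8 * lam ^ 2 * (u a b * ((q a b) ^ 6 - 9 * ((p a b) ^ 2 * (q a b) ^ 4) - 9 * ((p a b) ^ 4 * (q a b) ^ 2) + (p a b) ^ 6)) + 16 * lam ^ 3 * ((p a b * q a b) * ((q a b) ^ 4 - 6 * ((p a b) ^ 2 * (q a b) ^ 2) + (p a b) ^ 4))) / ((p a b) ^ 2 + (q a b) ^ 2) ^ 3) a :=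
        ((hU1x a b).add (((hD.mul ((hUa.mul hS).add ((hPa.mul hQa).const_mul
          (2 * lam)))).const_mul (4 * lam)).div (hS.npowc 2)
          (pow_ne_zero 2 h0))).congr_deriv (by simp only [Pi.add_apply, Pi.sub_apply, Pi.mul_apply]; push_cast; field_simp; ring)
      show deriv (fun y => pdX (fun x t => u x t + 4 * lam * p x t * q x t / ((p x t) ^ 2 + (q x t) ^ 2)) y b) a = _
      rw [hfun]
      exact H.deriv
    have key3 : ∀ a b, pdX (pdX (pdX (fun x t => u x t + 4 * lam * p x t * q x t / ((p x t) ^ 2 + (q x t) ^ 2)))) a b = pdX (pdX (pdX u)) a b + (4 * lam * (pdX (pdX u) a b * (((q a b) ^ 2 - (p a b) ^ 2) * ((p a b) ^ 2 + (q a b) ^ 2) ^ 3)) - 48 * lam * ((u a b * pdX u a b) * ((p a b * q a b) * ((p a b) ^ 2 + (q a b) ^ 2) ^ 3)) - 16 * lam * ((u a b) ^ 3 * (((q a b) ^ 2 - (p a b) ^ 2) * ((p a b) ^ 2 + (q a b) ^ 2) ^ 3)) + 8 * lam ^ 2 * (pdX u a b * ((q a b) ^ 8 - 12 * ((p a b)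 ^ 2 * (q a b) ^ 6) - 26 * ((p a b) ^ 4 * (q a b) ^ 4) - 12 * ((p a b) ^ 6 * (q a b) ^ 2) + (p a b) ^ 8)) - 224 * lam ^ 2 * ((u a b) ^ 2 * ((p a b * q a b) * (((q a b) ^ 2 - (p a b) ^ 2) * ((p a b) ^ 2 + (q a b) ^ 2) ^ 2))) + 16 * lam ^ 3 * (u a b * ((q a b) ^ 8 - 46 * ((p a b) ^ 2 * (q a b) ^ 6) + 46 * ((p a b) ^ 6 * (q a b) ^ 2) - (p a b) ^ 8)) + 32 * lam ^ 4 * ((p a b * q a b) * ((q a b) ^ 6 - 23 * ((p a b) ^ 2 * (q a b) ^ 4) + 23 * ((p a b) ^ 4 * (q a b) ^ 2) - (p a b) ^ 6))) / ((p a b) ^ 2 + (q a b) ^ 2) ^ 4 := by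
      intro a b
      have h0 := hnz a b
      have hfun : (fun y => pdX (pdX (fun x t => u x t + 4 * lam * p x t * q x t / ((p x t) ^ 2 + (q x t) ^ 2))) y b)
          = (fun y => pdX (pdX u) y b + (4 * lam * (pdX u y b * (((q y b) ^ 2 - (p y b) ^ 2) * ((p y b) ^ 2 + (q y b) ^ 2) ^ 2)) - 16 * lam * ((u y b) ^ 2 * ((p y b * q y b) * ((p y b) ^ 2 + (q y b) ^ 2) ^ 2)) + 8 * lam ^ 2 * (u y b * ((q y b) ^ 6 - 9 * ((p y b) ^ 2 * (q y b) ^ 4) - 9 * ((p y b) ^ 4 * (q y b) ^ 2) + (p y b) ^ 6)) + 16 * lam ^ 3 * ((p y b * q y b) * ((q y b) ^ 4 - 6 * ((p y b) ^ 2 * (q y b) ^ 2) + (p y b) ^ 4))) / ((p y b) ^ 2 + (q y b) ^ 2) ^ 3) := funext fun y => key2 y b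
      have hPa := hPx a b
      have hQa := hQx a b
      have hUa := hUx a b
      have hU1a := hU1x a b
      have hD := (hQa.npowc 2).sub (hPa.npowc 2)
      have hS := (hPa.npowc 2).add (hQa.npowc 2)
      have hT1 := (hU1a.mul (hD.mul (hS.npowc 2))).const_mul (4 * lam)
      have hT2 := (((hUa.npowc 2).mul ((hPa.mul hQa).mul (hS.npowc 2)))).const_mul (16 * lam)
      have hPoly6 := (((hQa.npowc 6).sub (((hPa.npowc 2).mul (hQa.npowc 4)).const_mul 9)).sub
        (((hPa.npowc 4).mul (hQa.npowc 2)).const_mul 9)).add (hPa.npowc 6)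
      have hT3 := (hUa.mul hPoly6).const_mul (8 * lam ^ 2)
      have hPoly4 := (((hQa.npowc 4).sub (((hPa.npowc 2).mul (hQa.npowc 2)).const_mul 6)).add
        (hPa.npowc 4))
      have hT4 := ((hPa.mul hQa).mul hPoly4).const_mul (16 * lam ^ 3)
      have H : HasDerivAt (fun y => pdX (pdX u) y b + (4 * lam * (pdX u y b * (((q y b) ^ 2 - (p y b) ^ 2) * ((p y b) ^ 2 + (q y b) ^ 2) ^ 2)) - 16 * lam * ((u y b) ^ 2 * ((p y b * q y b) * ((p y b) ^ 2 + (q y b) ^ 2) ^ 2)) + 8 * lam ^ 2 * (u y b * ((q y b) ^ 6 - 9 * ((p y b) ^ 2 * (q y b) ^ 4) - 9 * ((p y b) ^ 4 * (q y b) ^ 2) + (p y b) ^ 6)) + 16 * lam ^ 3 * ((p y b * q y b) * ((q y b) ^ 4 - 6 * ((p y b) ^ 2 * (q y b) ^ 2) + (p y b) ^ 4))) / ((p y b) ^ 2 + (q y b) ^ 2) ^ 3)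
          (pdX (pdX (pdX u)) a b + (4 * lam * (pdX (pdX u) a b * (((q a b) ^ 2 - (p a b) ^ 2) * ((p a b) ^ 2 + (q a b) ^ 2) ^ 3)) - 48 * lam * ((u a b * pdX u a b) * ((p a b * q a b) * ((p a b) ^ 2 + (q a b) ^ 2) ^ 3)) - 16 * lam * ((u a b) ^ 3 * (((q a b) ^ 2 - (p a b) ^ 2) * ((p a b) ^ 2 + (q a b) ^ 2) ^ 3)) + 8 * lam ^ 2 * (pdX u a b * ((q a b) ^ 8 - 12 * ((p a b) ^ 2 * (q a b) ^ 6) - 26 * ((p a b) ^ 4 * (q a b) ^ 4) - 12 * ((p a b) ^ 6 * (q a b) ^ 2) + (p a b) ^ 8)) - 224 * lam ^ 2 * ((u a b) ^ 2 * ((p a b * q a b) * (((q a b) ^ 2 - (p a b) ^ 2) * ((p a b) ^ 2 + (q a b) ^ 2) ^ 2))) + 16 * lam ^ 3 * (u a b * ((q a b) ^ 8 - 46 * ((p a b) ^ 2 * (q a b) ^ 6) + 46 * ((p a b) ^ 6 * (q a b) ^ 2) - (p a b) ^ 8)) + 32 * lam ^ 4 * ((p a b * q a b) * ((q a b) ^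 6 - 23 * ((p a b) ^ 2 * (q a b) ^ 4) + 23 * ((p a b) ^ 4 * (q a b) ^ 2) - (p a b) ^ 6))) / ((p a b) ^ 2 + (q a b) ^ 2) ^ 4) a :=
        ((hU2x a b).add ((((hT1.sub hT2).add hT3).add hT4).div (hS.npowc 3)
          (pow_ne_zero 3 h0))).congr_deriv (by simp only [Pi.add_apply, Pi.sub_apply, Pi.mul_apply]; push_cast; field_simp; ring)
      show deriv (fun y => pdX (pdX (fun x t => u x t + 4 * lam * p x t * q x t / ((p x t) ^ 2 + (q x t) ^ 2))) y b) a = _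
      rw [hfun]
      exact H.deriv
    have keyT : ∀ a b, pdT (fun x t => u x t + 4 * lam * p x t * q x t / ((p x t) ^ 2 + (q x t) ^ 2)) a b = -(pdX (pdX (pdX u)) a b) - 6 * (u a b) ^ 2 * pdX u a b + (-4 * lam * pdX (pdX u) a b * ((q a b) ^ 4 - (p a b) ^ 4) - 8 * lam * (u a b) ^ 3 * ((q a b) ^ 4 - (p a b) ^ 4) - 8 * lam ^ 2 * pdX u a b * ((q a b) ^ 2 - (p a b) ^ 2) ^ 2 - 16 * lam ^ 2 * (u a b) ^ 2 * (p a b * q a b) * ((q a b) ^ 2 - (p a b) ^ 2) - 16 * lam ^ 3 * u a b * ((q a b) ^ 4 - (p a b) ^ 4) - 32 * lam ^ 4 * (p a b * q a b) * ((q a b) ^ 2 - (p a b) ^ 2)) / ((p a b) ^ 2 + (q a b) ^ 2) ^ 2 := by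
      intro a b
      have h0 := hnz a b
      have hUt := sliceT hu a b
      have hPt := (sliceT hp a b).congr_deriv (hLax a b).1
      have hQt := (sliceT hq a b).congr_deriv (hLax a b).2
      have hmk : pdT u a b = -(6 * (u a b) ^ 2 * pdX u a b) - pdX (pdX (pdX u)) a b := by
        linear_combination hmkdv a b
      have H : HasDerivAt (fun s => u a s + 4 * lam * p a s * q a s
            / ((p a s) ^ 2 + (q a s) ^ 2))
          (-(pdX (pdX (pdX u)) a b) - 6 * (u a b) ^ 2 * pdX u a b + (-4 * lam * pdX (pdX u) a b * ((q a b) ^ 4 - (p a b) ^ 4) - 8 * lam * (u a b) ^ 3 * ((q a b) ^ 4 - (p a b) ^ 4) - 8 * lam ^ 2 * pdX u a b * ((q a b) ^ 2 - (p a b) ^ 2) ^ 2 - 16 * lam ^ 2 * (u a b) ^ 2 * (p a b * q a b) * ((q a b) ^ 2 - (p a b) ^ 2) - 16 * lam ^ 3 * u a b * ((q a b) ^ 4 - (p a b) ^ 4) - 32 * lam ^ 4 * (p a b * q a b) * ((q a b) ^ 2 - (p a b) ^ 2)) / ((p a b) ^ 2 + (q a b) ^ 2) ^ 2) b :=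
        (hUt.add (((hPt.const_mul (4 * lam)).mul hQt).div
          ((hPt.npowc 2).add ((hQt.npowc 2))) h0)).congr_deriv
          (by rw [hmk]; simp only [Pi.add_apply, Pi.sub_apply, Pi.mul_apply]; push_cast; field_simp; ring)
      exact H.deriv
    intro x t
    have h0 := hnz x t
    rw [keyT x t, key3 x t, key1 x t]
    beta_reduce
    field_simp
    ring
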